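/- Let i ≥ 1 be an integer, A > 0, s > 0, δ ∈ [0,1], μ, m, y ∈ ℝ, and β ∈ ℝ^i. Then ∫_{ℝ^i} ( ∏_{k=1}^{i} φ(x_k; μ, A) ) · φ( y − ⟨x, β⟩ − m; 0, 1/s )^{1/(1+δ)} dx = ( s/(2π) )^{1/(2(1+δ))} · ( 1 + (A s/(1+δ))·‖β‖² )^{−1/2} · exp( − ( y − m − μ·(Σ_{k=1}^{i} β_k) )² · s / ( 2(1+δ)·( 1 + (A s/(1+δ))·‖β‖² ) ) ), where ⟨x, β⟩ = Σ_k x_k β_k and ‖β‖² = Σ_k β_k². -/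

import Mathlib

/-!
With `v = 1 / s` and `p = 1 / (1 + δ)`, raising `φ(·; 0, v)` to the power `p` gives, up to a
constant factor, the density `φ(·; 0, v / p)`. The integral is then the density at `y - m` of
`⟨X, β⟩ + ε`, where the `X k` are i.i.d. `N(μ, A)` and `ε ~ N(0, v / p)` is independent of them,
i.e. the density of `N(μ ∑ β k, v / p + A ‖β‖²)`. This Gaussian convolution identity is proved
one coordinate at a time, by completing the square.
-/

open MeasureTheory

noncomputable section

/-- Density of the real Gaussian distribution `N(m, v)` with mean `m` and variance `v`. -/
def gauss (x m v : ℝ) : ℝ := (2 * Real.pi * v) ^ (-(1:ℝ)/2) * Real.exp (-(x - m)^2 / (2*v))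

open Real

lemma gauss_nonneg (x m : ℝ) {v : ℝ} (hv : 0 < v) : 0 ≤ gauss x m v := by
  unfold gauss; positivity

lemma gauss_le (x m : ℝ) {v : ℝ} (hv : 0 < v) : gauss x m v ≤ (2 * π * v) ^ (-(1:ℝ)/2) := by
  unfold gauss
  refine mul_le_of_le_one_right (by positivity) (exp_le_one_iff.2 ?_)
  have : 0 ≤ (x - m) ^ 2 / (2 * v) := by positivity
  linarith [neg_div (2 * v) ((x - m) ^ 2)]

lemma continuous_gauss (m v : ℝ) : Continuous fun x => gauss x m v := by
  unfold gauss; fun_prop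

lemma gauss_eq_gauss_sub (x m v : ℝ) : gauss x m v = gauss (x - m) 0 v := by
  simp only [gauss, sub_zero]

lemma integrable_gauss (m : ℝ) {v : ℝ} (hv : 0 < v) : Integrable fun x => gauss x m v := by
  unfold gauss
  refine Integrable.const_mul ?_ _
  have h : ∀ x : ℝ, -(x - m)^2/(2*v) = -(1/(2*v)) * (x - m)^2 := fun x => by ring
  simp_rw [h]
  exact (integrable_exp_neg_mul_sq (by positivity)).comp_sub_right m

lemma integral_exp_neg_mul_sq_add (a b c : ℝ) (ha : 0 < a) :
    ∫ x : ℝ, exp (-a * x ^ 2 + b * x + c) = √(π / a) * exp (b ^ 2 / (4 * a) + c) := by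
  have h : ∀ x : ℝ, -a * x ^ 2 + b * x + c = -a * (x - b / (2 * a)) ^ 2 + (b ^ 2 / (4 * a) + c) :=
    fun x => by field_simp; ring
  simp_rw [h, exp_add, integral_mul_const]
  rw [integral_sub_right_eq_self (fun x => exp (-a * x ^ 2)) (b / (2 * a)), integral_gaussian]

lemma rpow_neg_half {x : ℝ} (hx : 0 ≤ x) : x ^ (-(1:ℝ)/2) = (√x)⁻¹ := by
  rw [sqrt_eq_rpow, ← rpow_neg hx]; norm_num

lemma integral_gauss_mul_gauss {A v : ℝ} (hA : 0 < A) (hv : 0 < v) (μ b c : ℝ) :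
    ∫ x, gauss x μ A * gauss (c - x * b) 0 v = gauss c (μ * b) (v + A * b ^ 2) := by
  have ha : 0 < 1 / (2 * A) + b ^ 2 / (2 * v) := by positivity
  have hquadratic : ∀ x, gauss x μ A * gauss (c - x * b) 0 v
      = (2 * π * A) ^ (-(1:ℝ)/2) * (2 * π * v) ^ (-(1:ℝ)/2) *
        exp (-(1 / (2 * A) + b ^ 2 / (2 * v)) * x ^ 2 + (μ / A + c * b / v) * x
          + (-(μ ^ 2 / (2 * A)) - c ^ 2 / (2 * v))) := by
    intro x
    simp only [gauss]
    rw [mul_mul_mul_comm, ← exp_add]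
    congr 2
    field_simp
    ring
  simp_rw [hquadratic]
  rw [integral_const_mul, integral_exp_neg_mul_sq_add _ _ _ ha, gauss, ← mul_assoc]
  congr 1
  · rw [rpow_neg_half (by positivity), rpow_neg_half (by positivity),
      rpow_neg_half (by positivity)]
    have h : π / (1 / (2 * A) + b ^ 2 / (2 * v))
        = 2 * π * A * (2 * π * v) / (2 * π * (v + A * b ^ 2)) := by
      field_simp
    have : 0 < √(2 * π * A) := by positivity
    have : 0 < √(2 * π * v) := by positivity
    rw [h, sqrt_div' _ (by positivity), sqrt_mul (x := 2 * π * A) (by positivity)]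
    field_simp
  · congr 1
    field_simp
    ring

lemma integral_fin_succ_eq_integral_prod {α E : Type*} [MeasureSpace α]
    [SigmaFinite (volume : Measure α)] [NormedAddCommGroup E] [NormedSpace ℝ E] {n : ℕ}
    (f : (Fin (n + 1) → α) → E) :
    ∫ x, f x = ∫ p : α × (Fin n → α), f (Fin.cons p.1 p.2) := by
  rw [← ((volume_preserving_piFinSuccAbove (fun _ : Fin (n + 1) => α) 0).symm).integral_comp']
  simp only [MeasurableEquiv.piFinSuccAbove_symm_apply, Fin.insertNthEquiv, Fin.insertNth_zero',
    Equiv.coe_fn_mk]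

lemma integral_prod_gauss_mul_gauss {A v : ℝ} (hA : 0 < A) (hv : 0 < v) (μ : ℝ) {n : ℕ}
    (c : ℝ) (β : Fin n → ℝ) :
    ∫ x : Fin n → ℝ, (∏ k, gauss (x k) μ A) * gauss (c - ∑ k, x k * β k) 0 v
      = gauss c (μ * ∑ k, β k) (v + A * ∑ k, β k ^ 2) := by
  induction n generalizing c with
  | zero => simp [volume_pi, measureReal_def]
  | succ n ih =>
    set Q := ∑ k : Fin n, β k.succ ^ 2
    set S := ∑ k : Fin n, β k.succ
    have hG : Integrable (fun p : ℝ × (Fin n → ℝ) => gauss p.1 μ A * ∏ k, gauss (p.2 k) μ A) :=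
      (integrable_gauss μ hA).mul_prod (Integrable.fin_nat_prod fun _ => integrable_gauss μ hA)
    have hF : Integrable (fun p : ℝ × (Fin n → ℝ) => (gauss p.1 μ A * ∏ k, gauss (p.2 k) μ A) *
        gauss (c - (p.1 * β 0 + ∑ k : Fin n, p.2 k * β k.succ)) 0 v) :=
      hG.mul_bdd ((continuous_gauss 0 v).comp (by fun_prop)).aestronglyMeasurable
        (.of_forall fun p => by
          rw [norm_of_nonneg (gauss_nonneg _ _ hv)]; exact gauss_le _ _ hv)
    have hinner : ∀ z : ℝ, ∫ w : Fin n → ℝ, (gauss z μ A * ∏ k, gauss (w k) μ A) *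
          gauss (c - (z * β 0 + ∑ k : Fin n, w k * β k.succ)) 0 v
        = gauss z μ A * gauss ((c - μ * S) - z * β 0) 0 (v + A * Q) := by
      intro z
      simp_rw [mul_assoc, sub_add_eq_sub_sub]
      rw [integral_const_mul, ih (c - z * β 0) fun k => β k.succ,
        gauss_eq_gauss_sub (c - z * β 0), sub_right_comm]
    rw [integral_fin_succ_eq_integral_prod]
    simp only [Fin.prod_univ_succ, Fin.sum_univ_succ, Fin.cons_zero, Fin.cons_succ]
    rw [Measure.volume_eq_prod, integral_prod _ hF]
    simp_rw [hinner]
    rw [integral_gauss_mul_gauss hA (by positivity), gauss_eq_gauss_sub, gauss_eq_gauss_sub c]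
    congr 1 <;> ring

lemma gauss_rpow (x m : ℝ) {v p : ℝ} (hv : 0 < v) (hp : 0 < p) :
    gauss x m v ^ p = (2 * π * v) ^ (-p / 2) * √(2 * π * (v / p)) * gauss x m (v / p) := by
  have hw : 0 < 2 * π * (v / p) := by positivity
  simp only [gauss]
  rw [rpow_neg_half hw.le, mul_assoc _ √_, mul_inv_cancel_left₀ (sqrt_pos.2 hw).ne',
    mul_rpow (by positivity) (exp_pos _).le, ← rpow_mul (by positivity), ← exp_mul]
  congr 2
  · ring
  · field_simp

theorem statement7_general (i : ℕ) (A s : ℝ) (hA : 0 < A) (hs : 0 < s)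
    (δ : ℝ) (hδ : δ ∈ Set.Icc (0:ℝ) 1) (μ m y : ℝ) (β : Fin i → ℝ) :
    (∫ x : Fin i → ℝ, (∏ k, gauss (x k) μ A) *
        gauss (y - (∑ k, x k * β k) - m) 0 (1/s) ^ ((1:ℝ)/(1+δ))) =
      (s/(2*Real.pi)) ^ ((1:ℝ)/(2*(1+δ))) *
        (1 + (A*s/(1+δ)) * ∑ k, β k ^ 2) ^ (-(1:ℝ)/2) *
          Real.exp (-(y - m - μ * ∑ k, β k)^2 * s /
            (2*(1+δ)*(1 + (A*s/(1+δ)) * ∑ k, β k ^ 2))) := by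
  have hδ' : 0 < 1 + δ := by linarith [hδ.1]
  set v := 1 / s
  set p := 1 / (1 + δ)
  have hv : 0 < v := by positivity
  have hp : 0 < p := by positivity
  have hintegrand : ∀ x : Fin i → ℝ,
      (∏ k, gauss (x k) μ A) * gauss (y - ∑ k, x k * β k - m) 0 v ^ p =
        (2 * π * v) ^ (-p / 2) * √(2 * π * (v / p)) *
          ((∏ k, gauss (x k) μ A) * gauss ((y - m) - ∑ k, x k * β k) 0 (v / p)) := by
    intro x
    rw [gauss_rpow _ _ hv hp, sub_right_comm]
    ring
  simp_rw [hintegrand]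
  rw [integral_const_mul, integral_prod_gauss_mul_gauss hA (by positivity)]
  set Q := ∑ k, β k ^ 2
  have hD : 0 < 1 + A * s / (1 + δ) * Q := by positivity
  have hw : 0 < 2 * π * (v / p) := by positivity
  have hvar : 2 * π * (v / p + A * Q) = 2 * π * (v / p) * (1 + A * s / (1 + δ) * Q) := by
    simp only [v, p]; field_simp
  have hnorm : 2 * π * v = (s / (2 * π))⁻¹ := by simp only [v]; field_simp
  rw [gauss, hvar, mul_rpow hw.le hD.le, rpow_neg_half hw.le, ← mul_assoc, mul_assoc _ √_,
    mul_inv_cancel_left₀ (sqrt_pos.2 hw).ne', hnorm, inv_rpow (by positivity),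
    ← rpow_neg (by positivity)]
  congr 2
  · simp only [p]; field_simp
  · simp only [v, p]; field_simp

theorem statement7 (i : ℕ) (hi : 1 ≤ i) (A s : ℝ) (hA : 0 < A) (hs : 0 < s)
    (δ : ℝ) (hδ : δ ∈ Set.Icc (0:ℝ) 1) (μ m y : ℝ) (β : Fin i → ℝ) :
    (∫ x : Fin i → ℝ, (∏ k, gauss (x k) μ A) *
        gauss (y - (∑ k, x k * β k) - m) 0 (1/s) ^ ((1:ℝ)/(1+δ))) =
      (s/(2*Real.pi)) ^ ((1:ℝ)/(2*(1+δ))) *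
        (1 + (A*s/(1+δ)) * ∑ k, β k ^ 2) ^ (-(1:ℝ)/2) *
          Real.exp (-(y - m - μ * ∑ k, β k)^2 * s /
            (2*(1+δ)*(1 + (A*s/(1+δ)) * ∑ k, β k ^ 2))) :=
  statement7_general i A s hA hs δ hδ μ m y β
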